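/- Let k ∈ ℝ³ be nonzero and let t be a trace-free real symmetric 3×3 matrix with t k = 0 (i.e. Σ_j k_j t_{ij} = 0 for each i). Then there exists a trace-free real symmetric 3×3 matrix h with σ_k(H)(h) = t. Conversely, for every trace-free symmetric h, σ_k(H)(h) is trace-free symmetric and satisfies σ_k(H)(h) k = 0. (Exactness of the symbol sequence of the conformal complex at the slot S₀² → div₂.) -/

import Mathlib

open scoped BigOperators

/-- The Levi-Civita symbol `ε_{ijk}` on three indices. -/
def eps : Fin 3 → Fin 3 → Fin 3 → ℝ := fun i j k =>
  if (i, j, k) = ((0 : Fin 3), (1 : Fin 3), (2 : Fin 3)) ∨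
     (i, j, k) = ((1 : Fin 3), (2 : Fin 3), (0 : Fin 3)) ∨
     (i, j, k) = ((2 : Fin 3), (0 : Fin 3), (1 : Fin 3)) then 1
  else if (i, j, k) = ((2 : Fin 3), (1 : Fin 3), (0 : Fin 3)) ∨
     (i, j, k) = ((1 : Fin 3), (0 : Fin 3), (2 : Fin 3)) ∨
     (i, j, k) = ((0 : Fin 3), (2 : Fin 3), (1 : Fin 3)) then -1
  else 0

/-- The Kronecker delta `δ_{ij}`. -/
def kdelta (i j : Fin 3) : ℝ := if i = j then 1 else 0

/-- The cross product on `ℝ³`: `(a × b)_i = Σ_{j,l} ε_{ijl} a_j b_l`. -/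
def cross (a b : Fin 3 → ℝ) : Fin 3 → ℝ := fun i => ∑ j, ∑ l, eps i j l * a j * b l

/-- The symbol of `rot₂`:
`(σ_k(rot₂)(h))_{ij} = Σ_{ℓ,m} ( ε_{iℓm} k_ℓ h_{mj} + ε_{jℓm} k_ℓ h_{mi} )`. -/
def sigRot2 (k : Fin 3 → ℝ) (h : Fin 3 → Fin 3 → ℝ) : Fin 3 → Fin 3 → ℝ :=
  fun i j => ∑ l, ∑ m, (eps i l m * k l * h m j + eps j l m * k l * h m i)

/-- The symbol of the linearised Cotton operator `H`:
`(σ_k(H)(h))_{ij} = 4( Σ_{n,ℓ,m} k_n k_ℓ ( k_i ε_{jℓm} + k_j ε_{iℓm} ) h_{mn}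
  − |k|² Σ_{ℓ,m} k_ℓ ( ε_{iℓm} h_{mj} + ε_{jℓm} h_{mi} ) )`. -/
def sigH (k : Fin 3 → ℝ) (h : Fin 3 → Fin 3 → ℝ) : Fin 3 → Fin 3 → ℝ :=
  fun i j => 4 * ((∑ n, ∑ l, ∑ m, k n * k l * (k i * eps j l m + k j * eps i l m) * h m n)
    - (∑ l, k l ^ 2) * (∑ l, ∑ m, k l * (eps i l m * h m j + eps j l m * h m i)))

/-!
With `w = k ⨯₃ (h k)` the symbol splits as
`σ_k(H)(h) = 4 (k ⊗ w + w ⊗ k) - 4 |k|² σ_k(rot₂)(h)`, and `σ_k(rot₂)(h) k = w`.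
Since `k ⬝ w = 0` and `σ_k(rot₂)` is trace-free on symmetric `h`, the second half follows.
If `t` is trace-free symmetric with `t k = 0`, then so is `σ_k(rot₂)(t)`, the first term vanishes
on it, and `σ_k(rot₂)² t = -4 |k|² t`; hence `h = σ_k(rot₂)(t) / (16 |k|⁴)` is a preimage of `t`.
-/

open Matrix

lemma sum_sq_ne_zero {k : Fin 3 → ℝ} (hk : k ≠ 0) : ∑ l, k l ^ 2 ≠ 0 := by
  intro h0
  apply hk
  funext l
  have hl := (Finset.sum_eq_zero_iff_of_nonneg fun l _ => sq_nonneg (k l)).1 h0 l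
    (Finset.mem_univ l)
  simpa using hl

lemma sum_sum_eps_mul_mul (a b : Fin 3 → ℝ) (i : Fin 3) :
    ∑ l, ∑ m, eps i l m * (a l * b m) = (a ⨯₃ b) i := by
  fin_cases i <;> simp [eps, Fin.sum_univ_three, cross_apply, sub_eq_add_neg, add_comm]

lemma cross_eq_crossProduct (a b : Fin 3 → ℝ) : cross a b = a ⨯₃ b := by
  ext i
  simp only [cross, mul_assoc, sum_sum_eps_mul_mul]

lemma sigRot2_apply (k : Fin 3 → ℝ) (h : Fin 3 → Fin 3 → ℝ) (i j : Fin 3) :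
    sigRot2 k h i j = (k ⨯₃ fun m => h m j) i + (k ⨯₃ fun m => h m i) j := by
  simp only [sigRot2, Finset.sum_add_distrib, mul_assoc, sum_sum_eps_mul_mul]

lemma sigRot2_symm (k : Fin 3 → ℝ) (h : Fin 3 → Fin 3 → ℝ) (i j : Fin 3) :
    sigRot2 k h i j = sigRot2 k h j i := by
  rw [sigRot2_apply, sigRot2_apply, add_comm]

lemma sigRot2_trace (k : Fin 3 → ℝ) {h : Fin 3 → Fin 3 → ℝ} (hs : ∀ i j, h i j = h j i) :
    ∑ i, sigRot2 k h i i = 0 := by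
  simp only [sigRot2_apply, cross_apply, Fin.sum_univ_three, Fin.isValue, cons_val_zero,
    cons_val_one, cons_val, hs 1 0, hs 2 0, hs 2 1]
  ring

lemma sigRot2_mulVec (k : Fin 3 → ℝ) (h : Fin 3 → Fin 3 → ℝ) :
    sigRot2 k h *ᵥ k = k ⨯₃ (h *ᵥ k) := by
  ext i
  fin_cases i <;>
    simp only [mulVec, dotProduct, sigRot2_apply, cross_apply, Fin.sum_univ_three, Fin.zero_eta,
      Fin.mk_one, Fin.reduceFinMk, Fin.isValue, cons_val_zero, cons_val_one, cons_val] <;>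
    ring

lemma sigRot2_sigRot2 (k : Fin 3 → ℝ) {t : Fin 3 → Fin 3 → ℝ} (hs : ∀ i j, t i j = t j i)
    (i j : Fin 3) :
    sigRot2 k (sigRot2 k t) i j = -(4 * ∑ l, k l ^ 2) * t i j
      + 3 * (k i * (t *ᵥ k) j + k j * (t *ᵥ k) i) - 2 * k i * k j * ∑ n, t n n
      - 2 * kdelta i j * (k ⬝ᵥ (t *ᵥ k) - (∑ l, k l ^ 2) * ∑ n, t n n) := by
  fin_cases i <;> fin_cases j <;>
    simp only [kdelta, mulVec, dotProduct, sigRot2_apply, cross_apply, Fin.sum_univ_three,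
      Fin.zero_eta, Fin.mk_one, Fin.reduceFinMk, Fin.isValue, Fin.reduceEq, ↓reduceIte,
      cons_val_zero, cons_val_one, cons_val, hs 1 0, hs 2 0, hs 2 1] <;>
    ring

lemma sigRot2_sigRot2_of_traceless_of_mulVec_eq_zero (k : Fin 3 → ℝ) {t : Fin 3 → Fin 3 → ℝ}
    (hs : ∀ i j, t i j = t j i) (htr : ∑ i, t i i = 0) (hdiv : t *ᵥ k = 0) (i j : Fin 3) :
    sigRot2 k (sigRot2 k t) i j = -(4 * ∑ l, k l ^ 2) * t i j := by
  simp [sigRot2_sigRot2 k hs, htr, hdiv]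

lemma sigH_eq (k : Fin 3 → ℝ) (h : Fin 3 → Fin 3 → ℝ) (i j : Fin 3) :
    sigH k h i j = 4 * (k i * (k ⨯₃ (h *ᵥ k)) j + k j * (k ⨯₃ (h *ᵥ k)) i)
      - 4 * (∑ l, k l ^ 2) * sigRot2 k h i j := by
  rw [← cross_eq_crossProduct]
  simp only [sigH, sigRot2, cross, mulVec, dotProduct, Fin.sum_univ_three]
  ring

lemma sigH_const_mul (k : Fin 3 → ℝ) (c : ℝ) (h : Fin 3 → Fin 3 → ℝ) (i j : Fin 3) :
    sigH k (fun a b => c * h a b) i j = c * sigH k h i j := by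
  simp only [sigH, Fin.sum_univ_three]
  ring

lemma sigH_of_mulVec_eq_zero (k : Fin 3 → ℝ) {h : Fin 3 → Fin 3 → ℝ} (hdiv : h *ᵥ k = 0)
    (i j : Fin 3) :
    sigH k h i j = -(4 * ∑ l, k l ^ 2) * sigRot2 k h i j := by
  rw [sigH_eq, hdiv, map_zero, Pi.zero_apply, Pi.zero_apply]
  ring

lemma sigH_symm (k : Fin 3 → ℝ) (h : Fin 3 → Fin 3 → ℝ) (i j : Fin 3) :
    sigH k h i j = sigH k h j i := by
  rw [sigH_eq, sigH_eq, sigRot2_symm]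
  ring

lemma sigH_trace (k : Fin 3 → ℝ) {h : Fin 3 → Fin 3 → ℝ} (hs : ∀ i j, h i j = h j i) :
    ∑ i, sigH k h i i = 0 := by
  have hw : ∑ i, k i * (k ⨯₃ (h *ᵥ k)) i = 0 := dot_self_cross k (h *ᵥ k)
  simp only [sigH_eq, Finset.sum_sub_distrib, Finset.sum_add_distrib, ← Finset.mul_sum,
    sigRot2_trace k hs, hw]
  ring

lemma sigH_mulVec (k : Fin 3 → ℝ) (h : Fin 3 → Fin 3 → ℝ) : sigH k h *ᵥ k = 0 := by
  ext i
  set w := k ⨯₃ (h *ᵥ k)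
  have hw : ∑ j, k j * w j = 0 := dot_self_cross k (h *ᵥ k)
  have hrot : ∑ j, sigRot2 k h i j * k j = w i := congrFun (sigRot2_mulVec k h) i
  have hterm : ∀ j, sigH k h i j * k j = 4 * k i * (k j * w j) + 4 * w i * k j ^ 2
      - 4 * (∑ l, k l ^ 2) * (sigRot2 k h i j * k j) := fun j => by rw [sigH_eq]; ring
  simp only [mulVec, dotProduct, Pi.zero_apply, hterm, Finset.sum_sub_distrib,
    Finset.sum_add_distrib, ← Finset.mul_sum, hw, hrot]
  ring

lemma exists_sigH_eq (k : Fin 3 → ℝ) (hk : k ≠ 0) {t : Fin 3 → Fin 3 → ℝ}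
    (hs : ∀ i j, t i j = t j i) (htr : ∑ i, t i i = 0) (hdiv : t *ᵥ k = 0) :
    ∃ h : Fin 3 → Fin 3 → ℝ, (∀ i j, h i j = h j i) ∧ (∑ i, h i i) = 0 ∧
      ∀ i j, sigH k h i j = t i j := by
  have hr : sigRot2 k t *ᵥ k = 0 := by rw [sigRot2_mulVec, hdiv, map_zero]
  refine ⟨fun a b => (16 * (∑ l, k l ^ 2) ^ 2)⁻¹ * sigRot2 k t a b,
    fun i j => congrArg _ (sigRot2_symm k t i j), ?_, fun i j => ?_⟩
  · rw [← Finset.mul_sum, sigRot2_trace k hs, mul_zero]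
  · have hS := sum_sq_ne_zero hk
    rw [sigH_const_mul, sigH_of_mulVec_eq_zero k hr,
      sigRot2_sigRot2_of_traceless_of_mulVec_eq_zero k hs htr hdiv]
    field_simp
    ring

/-- exactness of the symbol sequence of the conformal complex at the slot
`S₀² → div₂`: for `k ≠ 0`, every trace-free symmetric `t` with `t k = 0` is `σ_k(H)(h)`
for some trace-free symmetric `h`; conversely every `σ_k(H)(h)` is trace-free symmetric
and satisfies `σ_k(H)(h) k = 0`. -/
theorem stmt17 (k : Fin 3 → ℝ) (hk : k ≠ 0) :
    (∀ t : Fin 3 → Fin 3 → ℝ, (∀ i j, t i j = t j i) → (∑ i, t i i) = 0 →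
      (∀ i, ∑ j, t i j * k j = 0) →
      ∃ h : Fin 3 → Fin 3 → ℝ, (∀ i j, h i j = h j i) ∧ (∑ i, h i i) = 0 ∧
        ∀ i j, sigH k h i j = t i j) ∧
    (∀ h : Fin 3 → Fin 3 → ℝ, (∀ i j, h i j = h j i) → (∑ i, h i i) = 0 →
      (∀ i j, sigH k h i j = sigH k h j i) ∧ (∑ i, sigH k h i i) = 0 ∧
        (∀ i, ∑ j, sigH k h i j * k j = 0)) :=
  ⟨fun _ hs htr hdiv => exists_sigH_eq k hk hs htr (funext hdiv),
    fun h hs _ => ⟨sigH_symm k h, sigH_trace k hs, congrFun (sigH_mulVec k h)⟩⟩
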